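/- Let m and m* be two finite MDP models over the same finite state space S, finite action space A, and discount factor γ ∈ [0,1). Let π^b be any policy, let π_m^r be a rollout policy of π^b in m, let π_m^ce be a certainty-equivalence policy in m, and set Π = {π_m^r, π_m^ce}. If m is a performance-contrasting model (PCM) of m* with respect to Π and J, then J_{m*}^{π_m^r} ≥ J_{m*}^{π_m^ce}. -/

import Mathlib

/-! The certainty-equivalence policy is optimal in `m`: its value function is `V*`, which
dominates the value function of every policy. Hence `J_m^{ce} ≥ J_m^{r}`, and the PCM property
reverses this inequality in `m*`. -/

/-- A finite Markov decision process model over state space `S` and action space `A`: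
a transition kernel `p`, a reward function `r`, and an initial state distribution `d`. -/
structure MDP (S A : Type) where
  p : S → A → PMF S
  r : S → A → S → ℝ
  d : PMF S

variable {S A : Type}

/-- The expected one-step value `Σ_{s'} p(s,a)(s') (r(s,a,s') + γ V(s'))`. -/
noncomputable def expVal [Fintype S] (m : MDP S A) (γ : ℝ) (V : S → ℝ) (s : S) (a : A) : ℝ :=
  ∑ s' : S, (m.p s a s').toReal * (m.r s a s' + γ * V s')

/-- The Bellman evaluation operator `T_m^π` of policy `π` in model `m`. -/
noncomputable def bellman [Fintype S] [Fintype A] (m : MDP S A) (γ : ℝ)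
    (π : S → PMF A) (V : S → ℝ) (s : S) : ℝ :=
  ∑ a : A, (π s a).toReal * expVal m γ V s a

/-- `V` is the value function `V_m^π`, i.e. a fixed point of the Bellman evaluation
operator `T_m^π` (which is unique since `T_m^π` is a `γ`-contraction for `γ < 1`). -/
def IsValueFun [Fintype S] [Fintype A] (m : MDP S A) (γ : ℝ) (π : S → PMF A)
    (V : S → ℝ) : Prop :=
  ∀ s, bellman m γ π V s = V s

/-- The optimal Bellman operator `T_m^*`. -/
noncomputable def optBellman [Fintype S] [Fintype A] [Nonempty A] (m : MDP S A) (γ : ℝ)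
    (V : S → ℝ) (s : S) : ℝ :=
  Finset.univ.sup' Finset.univ_nonempty (fun a : A => expVal m γ V s a)

/-- `V` is the optimal value function `V_m^*`, i.e. a fixed point of `T_m^*`. -/
def IsOptValueFun [Fintype S] [Fintype A] [Nonempty A] (m : MDP S A) (γ : ℝ)
    (V : S → ℝ) : Prop :=
  ∀ s, optBellman m γ V s = V s

/-- The performance `J_m^π = Σ_s d(s) V_m^π(s)`, expressed via the value function `V` of `π`. -/
noncomputable def Jval [Fintype S] (m : MDP S A) (V : S → ℝ) : ℝ :=
  ∑ s : S, (m.d s).toReal * V s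

/-- The deterministic (stochastic) policy induced by a map `S → A`. -/
noncomputable def detPol (f : S → A) : S → PMF A := fun s => PMF.pure (f s)

/-- A deterministic policy `g` is greedy with respect to the one-step values induced by `V`
in model `m`: at each state it picks a maximizing action.  With `V = V_m^{π^b}` this says `g`
is a rollout policy of `π^b`; with `V = V_m^*` this says `g` is a certainty-equivalence policy. -/
def IsGreedyWrt [Fintype S] (m : MDP S A) (γ : ℝ) (V : S → ℝ) (g : S → A) : Prop :=
  ∀ s a, expVal m γ V s a ≤ expVal m γ V s (g s)

/-- `m` is a performance-contrasting model (PCM) of `mstar` w.r.t. a set `P` of policies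
and `J`: whenever `J_m^{πi} ≥ J_m^{πj}` for `πi, πj ∈ P`, we have `J_{m*}^{πi} ≤ J_{m*}^{πj}`. -/
def IsPCM [Fintype S] [Fintype A] (m mstar : MDP S A) (γ : ℝ)
    (P : Set (S → PMF A)) : Prop :=
  ∀ πi ∈ P, ∀ πj ∈ P, ∀ Vi Vj Wi Wj : S → ℝ,
    IsValueFun m γ πi Vi → IsValueFun m γ πj Vj →
    IsValueFun mstar γ πi Wi → IsValueFun mstar γ πj Wj →
    Jval m Vi ≥ Jval m Vj → Jval mstar Wi ≤ Jval mstar Wj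

/-- `m` is a performance-resembling model (PRM) of `mstar` w.r.t. a set `P` of policies
and `J`: whenever `J_m^{πi} ≥ J_m^{πj}` for `πi, πj ∈ P`, we have `J_{m*}^{πi} ≥ J_{m*}^{πj}`. -/
def IsPRM [Fintype S] [Fintype A] (m mstar : MDP S A) (γ : ℝ)
    (P : Set (S → PMF A)) : Prop :=
  ∀ πi ∈ P, ∀ πj ∈ P, ∀ Vi Vj Wi Wj : S → ℝ,
    IsValueFun m γ πi Vi → IsValueFun m γ πj Vj →
    IsValueFun mstar γ πi Wi → IsValueFun mstar γ πj Wj →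
    Jval m Vi ≥ Jval m Vj → Jval mstar Wi ≥ Jval mstar Wj

/-- A policy `π` is optimal in `m` if its value function coincides with `V_m^*`. -/
def IsOptimalIn [Fintype S] [Fintype A] [Nonempty A] (m : MDP S A) (γ : ℝ)
    (π : S → PMF A) : Prop :=
  ∀ V Vstar : S → ℝ, IsValueFun m γ π V → IsOptValueFun m γ Vstar → ∀ s, V s = Vstar s

/-- `m` is a performance-minimizing model (PNM) of `mstar` w.r.t. `P` and `J`: a PCM such
that every policy in `P` optimal in `m` attains the worst possible performance in `mstar`. -/
def IsPNM [Fintype S] [Fintype A] [Nonempty A] (m mstar : MDP S A) (γ : ℝ)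
    (P : Set (S → PMF A)) : Prop :=
  IsPCM m mstar γ P ∧
    ∀ π ∈ P, IsOptimalIn m γ π →
      ∀ (π' : S → PMF A) (W W' : S → ℝ),
        IsValueFun mstar γ π W → IsValueFun mstar γ π' W' →
        Jval mstar W ≤ Jval mstar W'

/-- `m` is a performance-maximizing model (PXM) of `mstar` w.r.t. `P` and `J`: a PRM such
that every policy in `P` optimal in `m` attains the best possible performance in `mstar`. -/
def IsPXM [Fintype S] [Fintype A] [Nonempty A] (m mstar : MDP S A) (γ : ℝ)
    (P : Set (S → PMF A)) : Prop :=
  IsPRM m mstar γ P ∧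
    ∀ π ∈ P, IsOptimalIn m γ π →
      ∀ (π' : S → PMF A) (W W' : S → ℝ),
        IsValueFun mstar γ π W → IsValueFun mstar γ π' W' →
        Jval mstar W ≥ Jval mstar W'

theorem PMF.sum_toReal_eq_one {α : Type*} [Fintype α] (p : PMF α) :
    ∑ a, (p a).toReal = 1 := by
  have h := p.tsum_coe
  rw [tsum_fintype] at h
  rw [← ENNReal.toReal_sum fun a _ => p.apply_ne_top a, h, ENNReal.toReal_one]

theorem PMF.sum_toReal_mul_le {α : Type*} [Fintype α] (p : PMF α) {f : α → ℝ} {c : ℝ}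
    (h : ∀ a, f a ≤ c) : ∑ a, (p a).toReal * f a ≤ c :=
  calc ∑ a, (p a).toReal * f a ≤ ∑ a, (p a).toReal * c :=
        Finset.sum_le_sum fun a _ => mul_le_mul_of_nonneg_left (h a) ENNReal.toReal_nonneg
    _ = c := by rw [← Finset.sum_mul, p.sum_toReal_eq_one, one_mul]

section Bellman

variable [Fintype S] (m : MDP S A) {γ : ℝ}

theorem expVal_sub_expVal (V W : S → ℝ) (s : S) (a : A) :
    expVal m γ V s a - expVal m γ W s a = γ * ∑ s', (m.p s a s').toReal * (V s' - W s') := by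
  simp only [expVal, Finset.mul_sum, ← Finset.sum_sub_distrib]
  exact Finset.sum_congr rfl fun s' _ => by ring

theorem expVal_le_add (hγ : 0 ≤ γ) {V W : S → ℝ} {c : ℝ} (h : ∀ s, V s ≤ W s + c)
    (s : S) (a : A) : expVal m γ V s a ≤ expVal m γ W s a + γ * c := by
  have hdiff : ∑ s', (m.p s a s').toReal * (V s' - W s') ≤ c :=
    (m.p s a).sum_toReal_mul_le fun s' => by linarith [h s']
  linarith [expVal_sub_expVal m (γ := γ) V W s a, mul_le_mul_of_nonneg_left hdiff hγ]

variable [Fintype A]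

theorem bellman_le_add (hγ : 0 ≤ γ) (π : S → PMF A) {V W : S → ℝ} {c : ℝ}
    (h : ∀ s, V s ≤ W s + c) (s : S) : bellman m γ π V s ≤ bellman m γ π W s + γ * c := by
  have hdiff : ∑ a, (π s a).toReal * (expVal m γ V s a - expVal m γ W s a) ≤ γ * c :=
    (π s).sum_toReal_mul_le fun a => by linarith [expVal_le_add m hγ h s a]
  simp only [mul_sub, Finset.sum_sub_distrib] at hdiff
  simp only [bellman]
  linarith

theorem lipschitzWith_bellman (hγ : 0 ≤ γ) (π : S → PMF A) :
    LipschitzWith ⟨γ, hγ⟩ (bellman m γ π) := by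
  refine LipschitzWith.of_dist_le_mul fun V W => (dist_pi_le_iff (by positivity)).2 fun s => ?_
  have hdist : ∀ s, |V s - W s| ≤ dist V W := fun s =>
    (Real.dist_eq _ _).symm.trans_le (dist_le_pi_dist V W s)
  have hVW : ∀ s, V s ≤ W s + dist V W := fun s => by linarith [abs_le.1 (hdist s)]
  have hWV : ∀ s, W s ≤ V s + dist V W := fun s => by linarith [abs_le.1 (hdist s)]
  change dist _ _ ≤ γ * dist V W
  rw [Real.dist_eq, abs_sub_le_iff]
  exact ⟨by linarith [bellman_le_add m hγ π hVW s], by linarith [bellman_le_add m hγ π hWV s]⟩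

theorem exists_isValueFun (hγ0 : 0 ≤ γ) (hγ1 : γ < 1) (π : S → PMF A) :
    ∃ V, IsValueFun m γ π V := by
  have hT : ContractingWith ⟨γ, hγ0⟩ (bellman m γ π) :=
    ⟨by exact_mod_cast hγ1, lipschitzWith_bellman m hγ0 π⟩
  exact ⟨_, fun s => congrFun (ContractingWith.fixedPoint_isFixedPt hT) s⟩

theorem bellman_detPol (f : S → A) (V : S → ℝ) (s : S) :
    bellman m γ (detPol f) V s = expVal m γ V s (f s) := by
  classical
  simp [bellman, detPol, PMF.pure_apply, apply_ite ENNReal.toReal]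

variable [Nonempty A]

theorem bellman_le_optBellman (π : S → PMF A) (V : S → ℝ) (s : S) :
    bellman m γ π V s ≤ optBellman m γ V s :=
  (π s).sum_toReal_mul_le fun a => Finset.le_sup' (fun a => expVal m γ V s a) (Finset.mem_univ a)

theorem IsOptValueFun.isValueFun_detPol {Vstar : S → ℝ} (hVstar : IsOptValueFun m γ Vstar)
    {g : S → A} (hg : IsGreedyWrt m γ Vstar g) : IsValueFun m γ (detPol g) Vstar := fun s =>
  (bellman_detPol m g Vstar s).trans <| (le_antisymm (Finset.le_sup' _ (Finset.mem_univ _))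
    (Finset.sup'_le _ _ fun a _ => hg s a)).trans (hVstar s)

/-- Comparing `V` and `V*` at a state where `V - V*` is maximal, with maximum `M`, gives
`M ≤ γ M`, hence `M ≤ 0`. -/
theorem IsValueFun.le_of_isOptValueFun (hγ0 : 0 ≤ γ) (hγ1 : γ < 1) {π : S → PMF A}
    {V Vstar : S → ℝ} (hV : IsValueFun m γ π V) (hVstar : IsOptValueFun m γ Vstar) :
    V ≤ Vstar := by
  intro s
  have : Nonempty S := ⟨s⟩
  obtain ⟨s₀, hs₀⟩ := Finite.exists_max fun s => V s - Vstar s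
  set M := V s₀ - Vstar s₀
  have hM : M ≤ γ * M :=
    calc M = bellman m γ π V s₀ - Vstar s₀ := by rw [hV s₀]
      _ ≤ bellman m γ π Vstar s₀ + γ * M - Vstar s₀ := by
          gcongr; exact bellman_le_add m hγ0 π (fun s => by linarith [hs₀ s]) s₀
      _ ≤ optBellman m γ Vstar s₀ + γ * M - Vstar s₀ := by
          gcongr; exact bellman_le_optBellman m π Vstar s₀
      _ = γ * M := by rw [hVstar s₀]; ring
  have hM0 : M ≤ 0 := by nlinarith
  linarith [hs₀ s]

end Bellman

theorem Jval_mono [Fintype S] (m : MDP S A) {V W : S → ℝ} (h : V ≤ W) : Jval m V ≤ Jval m W :=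
  Finset.sum_le_sum fun s _ => mul_le_mul_of_nonneg_left (h s) ENNReal.toReal_nonneg

theorem pcm_rollout_ge_ce_general
    {S A : Type} [Fintype S] [Fintype A] [Nonempty A]
    (m mstar : MDP S A) (γ : ℝ) (hγ0 : 0 ≤ γ) (hγ1 : γ < 1)
    -- rollout policy of `πb` in `m`
    (πr : S → A)
    -- optimal value function of `m` and a certainty-equivalence policy in `m`
    (Vstar : S → ℝ) (hVstar : IsOptValueFun m γ Vstar)
    (πce : S → A) (hπce : IsGreedyWrt m γ Vstar πce)
    -- `m` is a PCM of `mstar` w.r.t. `Π = {π_m^r, π_m^ce}` and `J`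
    (hPCM : IsPCM m mstar γ {detPol πr, detPol πce})
    -- value functions of the two policies in `mstar`
    (Wr Wce : S → ℝ)
    (hWr : IsValueFun mstar γ (detPol πr) Wr)
    (hWce : IsValueFun mstar γ (detPol πce) Wce) :
    Jval mstar Wr ≥ Jval mstar Wce := by
  obtain ⟨Vr, hVr⟩ := exists_isValueFun m hγ0 hγ1 (detPol πr)
  have hJ : Jval m Vr ≤ Jval m Vstar :=
    Jval_mono m (hVr.le_of_isOptValueFun m hγ0 hγ1 hVstar)
  exact hPCM (detPol πce) (by simp) (detPol πr) (by simp) Vstar Vr Wce Wr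
    (hVstar.isValueFun_detPol m hπce) hVr hWce hWr hJ

/-- **Proposition 1.** If `m` is a PCM of `m*` with respect to `Π = {π_m^r, π_m^ce}` and
`J`, then `J_{m*}^{π_m^r} ≥ J_{m*}^{π_m^ce}`. -/
theorem pcm_rollout_ge_ce
    {S A : Type} [Fintype S] [Nonempty S] [Fintype A] [Nonempty A]
    (m mstar : MDP S A) (γ : ℝ) (hγ0 : 0 ≤ γ) (hγ1 : γ < 1)
    -- base policy and its value function in `m`
    (πb : S → PMF A) (Vb : S → ℝ) (hVb : IsValueFun m γ πb Vb)
    -- rollout policy of `πb` in `m`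
    (πr : S → A) (hπr : IsGreedyWrt m γ Vb πr)
    -- optimal value function of `m` and a certainty-equivalence policy in `m`
    (Vstar : S → ℝ) (hVstar : IsOptValueFun m γ Vstar)
    (πce : S → A) (hπce : IsGreedyWrt m γ Vstar πce)
    -- `m` is a PCM of `mstar` w.r.t. `Π = {π_m^r, π_m^ce}` and `J`
    (hPCM : IsPCM m mstar γ {detPol πr, detPol πce})
    -- value functions of the two policies in `mstar`
    (Wr Wce : S → ℝ)
    (hWr : IsValueFun mstar γ (detPol πr) Wr)
    (hWce : IsValueFun mstar γ (detPol πce) Wce) :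
    Jval mstar Wr ≥ Jval mstar Wce :=
  pcm_rollout_ge_ce_general m mstar γ hγ0 hγ1 πr Vstar hVstar πce hπce hPCM Wr Wce hWr hWce
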